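/- Define x₁ : (0,1) → ℝ by x₁(z) = z·((z²−3)/(z²−1))^(3/2), with the real power interpreted via rpow (note that (z²−3)/(z²−1) > 0 for 0 < z < 1). Then x₁ is twice differentiable on (0,1) and satisfies x₁''(z) = r(z)·x₁(z) for all z ∈ (0,1), where r(z) = −6·(z⁴ − 2z² − 9) / ((z²−1)²·(z²−3)²). -/

import Mathlib

/-- The algebraic solution `x₁(z) = z·((z²−3)/(z²−1))^{3/2}`
(equation (eq:X_sol_1_k=2) of the paper) of the reduced variational equation
`X'' = r(z)X` with `r(z) = −6(z⁴−2z²−9)/((z²−1)²(z²−3)²)`: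
`x₁` is twice differentiable on `(0,1)` and satisfies the equation there. -/
theorem x1_solves_reduced_equation_k2 :
    ∃ x₁' : ℝ → ℝ,
      (∀ z ∈ Set.Ioo (0 : ℝ) 1,
        HasDerivAt
          (fun z : ℝ => z * ((z ^ 2 - 3) / (z ^ 2 - 1)) ^ ((3 : ℝ)/2))
          (x₁' z) z) ∧
      (∀ z ∈ Set.Ioo (0 : ℝ) 1,
        HasDerivAt x₁'
          ((-6 * (z ^ 4 - 2 * z ^ 2 - 9)
              / ((z ^ 2 - 1) ^ 2 * (z ^ 2 - 3) ^ 2))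
            * (z * ((z ^ 2 - 3) / (z ^ 2 - 1)) ^ ((3 : ℝ)/2))) z) := by
  refine ⟨fun z => ((z ^ 2 - 3) / (z ^ 2 - 1)) ^ ((1 : ℝ)/2)
      * (z ^ 4 + 2 * z ^ 2 + 3) / (z ^ 2 - 1) ^ 2, ?_, ?_⟩
  · intro z hz
    obtain ⟨hz0, hz1⟩ := hz
    have h1 : z ^ 2 - 1 ≠ 0 := by nlinarith
    have h3 : z ^ 2 - 3 ≠ 0 := by nlinarith
    have hupos : 0 < (z ^ 2 - 3) / (z ^ 2 - 1) :=
      div_pos_of_neg_of_neg (by nlinarith) (by nlinarith)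
    have hd : HasDerivAt (fun z : ℝ => (z ^ 2 - 3) / (z ^ 2 - 1))
        ((2 * z * (z ^ 2 - 1) - (z ^ 2 - 3) * (2 * z)) / (z ^ 2 - 1) ^ 2) z := by
      have := (((hasDerivAt_pow 2 z).sub_const 3).div
        ((hasDerivAt_pow 2 z).sub_const 1) h1)
      refine this.congr_deriv ?_
      push_cast
      ring
    have hr := hd.rpow_const (p := (3 : ℝ)/2) (Or.inl (ne_of_gt hupos))
    have hmul := (hasDerivAt_id z).mul hr
    refine hmul.congr_deriv ?_
    simp only [id_eq, Pi.mul_apply]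
    have e1 : ((3 : ℝ)/2 - 1) = (1 : ℝ)/2 := by norm_num
    have e2 : ((z ^ 2 - 3) / (z ^ 2 - 1)) ^ ((3 : ℝ)/2)
        = ((z ^ 2 - 3) / (z ^ 2 - 1)) * ((z ^ 2 - 3) / (z ^ 2 - 1)) ^ ((1 : ℝ)/2) := by
      rw [show ((3 : ℝ)/2) = 1 + 1/2 by norm_num, Real.rpow_add hupos, Real.rpow_one]
    rw [e1, e2]
    set s := ((z ^ 2 - 3) / (z ^ 2 - 1)) ^ ((1 : ℝ)/2)
    field_simp
    ring
  · intro z hz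
    obtain ⟨hz0, hz1⟩ := hz
    have h1 : z ^ 2 - 1 ≠ 0 := by nlinarith
    have h3 : z ^ 2 - 3 ≠ 0 := by nlinarith
    have hupos : 0 < (z ^ 2 - 3) / (z ^ 2 - 1) :=
      div_pos_of_neg_of_neg (by nlinarith) (by nlinarith)
    have hd : HasDerivAt (fun z : ℝ => (z ^ 2 - 3) / (z ^ 2 - 1))
        ((2 * z * (z ^ 2 - 1) - (z ^ 2 - 3) * (2 * z)) / (z ^ 2 - 1) ^ 2) z := by
      have := (((hasDerivAt_pow 2 z).sub_const 3).div
        ((hasDerivAt_pow 2 z).sub_const 1) h1)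
      refine this.congr_deriv ?_
      push_cast
      ring
    have hr := hd.rpow_const (p := (1 : ℝ)/2) (Or.inl (ne_of_gt hupos))
    have hpoly : HasDerivAt (fun z : ℝ => z ^ 4 + 2 * z ^ 2 + 3)
        (4 * z ^ 3 + 4 * z) z := by
      have := ((hasDerivAt_pow 4 z).add
        ((hasDerivAt_pow 2 z).const_mul 2)).add_const 3
      refine this.congr_deriv ?_
      push_cast
      ring
    have hden : HasDerivAt (fun z : ℝ => (z ^ 2 - 1) ^ 2)
        (2 * (z ^ 2 - 1) * (2 * z)) z := by
      have := ((hasDerivAt_pow 2 z).sub_const 1).pow 2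
      refine this.congr_deriv ?_
      push_cast
      ring
    have hden' : (z ^ 2 - 1) ^ 2 ≠ 0 := pow_ne_zero 2 h1
    have hF := ((hr.mul hpoly).div hden hden')
    refine hF.congr_deriv ?_
    simp only [id_eq, Pi.mul_apply]
    have e1 : ((z ^ 2 - 3) / (z ^ 2 - 1)) ^ ((1 : ℝ)/2 - 1)
        = ((z ^ 2 - 3) / (z ^ 2 - 1)) ^ ((1 : ℝ)/2) / ((z ^ 2 - 3) / (z ^ 2 - 1)) := by
      rw [show ((1 : ℝ)/2 - 1) = 1/2 - 1 by norm_num, Real.rpow_sub hupos, Real.rpow_one]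
    have e2 : ((z ^ 2 - 3) / (z ^ 2 - 1)) ^ ((3 : ℝ)/2)
        = ((z ^ 2 - 3) / (z ^ 2 - 1)) * ((z ^ 2 - 3) / (z ^ 2 - 1)) ^ ((1 : ℝ)/2) := by
      rw [show ((3 : ℝ)/2) = 1 + 1/2 by norm_num, Real.rpow_add hupos, Real.rpow_one]
    rw [e1, e2]
    set s := ((z ^ 2 - 3) / (z ^ 2 - 1)) ^ ((1 : ℝ)/2)
    field_simp
    ring
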